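/- Let κ be an infinite regular cardinal and I a proper ideal on κ containing every bounded subset of κ. Then there is no family ⟨X_α : α < κ⟩ of subsets of κ such that I⁺ = {Y ⊆ κ : X_α ∖ Y is bounded for some α < κ}. In other words, the collection I⁺ of I-positive sets is not generated modulo bounded sets by fewer than κ⁺ many sets. -/

import Mathlib

open Cardinal

/-- A subset of the ordinals below `κ` (realized as the type `κ.ord.ToType`)
is bounded if it is contained in a proper initial segment. -/
def Bdd {C : Type*} [Preorder C] (X : Set C) : Prop :=
  ∃ b : C, X ⊆ Set.Iio b

/-!
Every `X α` is `I`-positive (as `X α \ X α = ∅`), hence unbounded. Through a bijection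
`κ ≃ (κ × 2) × κ` every pair `(α, t)` labels `κ` many stages `γ < κ`, and by regularity a
strictly increasing `F` can pick `F γ ∈ X α` at each stage labelled `(α, t)`. Let `R` be the set
of values picked at stages labelled `(α, true)`: then `X α ∩ R` and `X α \ R` are both unbounded.
But one of `R`, `Rᶜ` is `I`-positive, so `X α \ R` or `X α \ Rᶜ = X α ∩ R` would be bounded.
-/

section Bdd

variable {C : Type*}

theorem Bdd.mono [Preorder C] {X Y : Set C} (hXY : X ⊆ Y) (hY : Bdd Y) : Bdd X :=
  let ⟨b, hb⟩ := hY
  ⟨b, hXY.trans hb⟩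

theorem bdd_empty [Preorder C] [Nonempty C] : Bdd (∅ : Set C) :=
  ⟨Classical.arbitrary C, Set.empty_subset _⟩

theorem Bdd.of_image_strictMono [LinearOrder C] [WellFoundedLT C] {F : C → C}
    (hF : StrictMono F) {S : Set C} (h : Bdd (F '' S)) : Bdd S :=
  let ⟨b, hb⟩ := h
  ⟨b, fun x hx => hF.le_apply.trans_lt (hb ⟨x, hx, rfl⟩)⟩

theorem exists_strictMono_forall_mem [LinearOrder C] [WellFoundedLT C]
    (hsmall : ∀ γ : C, ∀ f : Set.Iio γ → C, Bdd (Set.range f))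
    (A : C → Set C) (hA : ∀ γ, ¬ Bdd (A γ)) :
    ∃ F : C → C, StrictMono F ∧ ∀ γ, F γ ∈ A γ := by
  have hnext : ∀ γ (f : ∀ δ < γ, C), ∃ x ∈ A γ, ∀ δ (hδ : δ < γ), f δ hδ < x := by
    intro γ f
    obtain ⟨b, hb⟩ := hsmall γ fun δ => f δ δ.2
    obtain ⟨x, hxA, hbx⟩ : ∃ x ∈ A γ, b ≤ x := by
      by_contra! h
      exact hA γ ⟨b, h⟩
    exact ⟨x, hxA, fun δ hδ => (hb ⟨⟨δ, hδ⟩, rfl⟩).trans_le hbx⟩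
  let F : C → C := wellFounded_lt.fix fun γ f => (hnext γ f).choose
  have hF : ∀ γ, F γ = (hnext γ fun δ _ => F δ).choose := fun γ =>
    WellFounded.fix_eq _ _ _
  refine ⟨F, fun δ γ hδγ => ?_, fun γ => ?_⟩
  · rw [hF γ]
    exact (hnext γ fun δ _ => F δ).choose_spec.2 δ hδγ
  · rw [hF γ]
    exact (hnext γ _).choose_spec.1

end Bdd

namespace Cardinal

variable {κ : Cardinal.{u}}

theorem mk_lt_of_bdd {S : Set κ.ord.ToType} (h : Bdd S) : #S < κ := by
  obtain ⟨b, hb⟩ := h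
  calc #S ≤ #(Set.Iio b) := mk_le_mk_of_subset hb
    _ < #κ.ord.ToType := mk_Iio_lt b (by rw [mk_ord_toType, Ordinal.type_toType])
    _ = κ := mk_ord_toType κ

theorem not_bdd_range_of_injective {f : κ.ord.ToType → κ.ord.ToType}
    (hf : Function.Injective f) : ¬ Bdd (Set.range f) := fun h =>
  (mk_lt_of_bdd h).ne (by rw [mk_range_eq f hf, mk_ord_toType])

theorem IsRegular.bdd_of_mk_lt (hκ : κ.IsRegular) {S : Set κ.ord.ToType} (h : #S < κ) :
    Bdd S := by
  have hS : ¬ IsCofinal S := fun hc =>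
    (Order.cof_le hc).not_gt (by rwa [Ordinal.cof_toType, hκ.cof_ord])
  exact not_isCofinal_iff.1 hS

theorem IsRegular.nonempty_toType_ord (hκ : κ.IsRegular) : Nonempty κ.ord.ToType := by
  simp [Ordinal.nonempty_toType_iff, hκ.pos.ne']

theorem IsRegular.exists_equiv_prod_bool_prod (hκ : κ.IsRegular) :
    Nonempty (κ.ord.ToType ≃ (κ.ord.ToType × Bool) × κ.ord.ToType) := by
  have h2 : (2 : Cardinal) ≤ κ := ofNat_le_aleph0.trans hκ.aleph0_le
  refine Cardinal.eq.1 ?_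
  simp [mul_eq_max_of_aleph0_le_left, hκ.aleph0_le, h2, mul_eq_self]

theorem IsRegular.exists_splitting_set (hκ : κ.IsRegular)
    (X : κ.ord.ToType → Set κ.ord.ToType) (hX : ∀ α, ¬ Bdd (X α)) :
    ∃ R : Set κ.ord.ToType, ∀ α, ¬ Bdd (X α ∩ R) ∧ ¬ Bdd (X α \ R) := by
  obtain ⟨e⟩ := hκ.exists_equiv_prod_bool_prod
  obtain ⟨F, hF, hFX⟩ := exists_strictMono_forall_mem
    (fun γ f => hκ.bdd_of_mk_lt (mk_range_le.trans_lt (mk_lt_of_bdd ⟨γ, subset_rfl⟩)))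
    (fun γ => X (e γ).1.1) (fun γ => hX _)
  -- `visits α t` enumerates the stages `γ` with `(e γ).1 = (α, t)`.
  let visits (α : κ.ord.ToType) (t : Bool) (β : κ.ord.ToType) := e.symm ((α, t), β)
  have hvisits : ∀ α t, ¬ Bdd (F '' Set.range (visits α t)) := fun α t h =>
    not_bdd_range_of_injective (e.symm.injective.comp (Prod.mk_right_injective (α, t)))
      (h.of_image_strictMono hF)
  refine ⟨F '' {γ | (e γ).1.2 = true}, fun α => ⟨fun h => ?_, fun h => ?_⟩⟩
  · refine hvisits α true (h.mono ?_)
    rintro _ ⟨_, ⟨β, rfl⟩, rfl⟩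
    exact ⟨by simpa [visits] using hFX (visits α true β), _, by simp [visits], rfl⟩
  · refine hvisits α false (h.mono ?_)
    rintro _ ⟨_, ⟨β, rfl⟩, rfl⟩
    refine ⟨by simpa [visits] using hFX (visits α false β), ?_⟩
    rintro ⟨γ, hγ, hFγ⟩
    rw [hF.injective hFγ] at hγ
    simp [visits] at hγ

end Cardinal

theorem statement4_general (κ : Cardinal.{0}) (hκreg : κ.IsRegular)
    (I : Set (Set κ.ord.ToType))
    (hunion : ∀ X ∈ I, ∀ Y ∈ I, X ∪ Y ∈ I)
    (hproper : (Set.univ : Set κ.ord.ToType) ∉ I)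
    (hbdd : ∀ X : Set κ.ord.ToType, Bdd X → X ∈ I) :
    ¬ ∃ X : κ.ord.ToType → Set κ.ord.ToType,
        {Y : Set κ.ord.ToType | Y ∉ I} = {Y : Set κ.ord.ToType | ∃ a, Bdd (X a \ Y)} := by
  rintro ⟨X, hX⟩
  have hpositive : ∀ Y, Y ∉ I ↔ ∃ a, Bdd (X a \ Y) := fun Y => Set.ext_iff.1 hX Y
  have := hκreg.nonempty_toType_ord
  have hXunbdd : ∀ a, ¬ Bdd (X a) := fun a h =>
    (hpositive (X a)).2 ⟨a, by simpa using bdd_empty⟩ (hbdd _ h)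
  obtain ⟨R, hR⟩ := hκreg.exists_splitting_set X hXunbdd
  have hRpos : R ∉ I ∨ Rᶜ ∉ I := by
    by_contra! h
    exact hproper (by simpa using hunion _ h.1 _ h.2)
  rcases hRpos with hRpos | hRpos
  · obtain ⟨a, ha⟩ := (hpositive R).1 hRpos
    exact (hR a).2 ha
  · obtain ⟨a, ha⟩ := (hpositive Rᶜ).1 hRpos
    exact (hR a).1 (by rwa [Set.sdiff_compl] at ha)

theorem statement4 (κ : Cardinal.{0}) (hκreg : κ.IsRegular)
    (I : Set (Set κ.ord.ToType))
    (hdown : ∀ X Y : Set κ.ord.ToType, X ⊆ Y → Y ∈ I → X ∈ I)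
    (hunion : ∀ X ∈ I, ∀ Y ∈ I, X ∪ Y ∈ I)
    (hproper : (Set.univ : Set κ.ord.ToType) ∉ I)
    (hbdd : ∀ X : Set κ.ord.ToType, Bdd X → X ∈ I) :
    ¬ ∃ X : κ.ord.ToType → Set κ.ord.ToType,
        {Y : Set κ.ord.ToType | Y ∉ I} = {Y : Set κ.ord.ToType | ∃ a, Bdd (X a \ Y)} :=
  statement4_general κ hκreg I hunion hproper hbdd
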